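/- Suppose θ < λ are infinite regular cardinals and D is a transitive, uniform, normal θ-covering matrix for λ. Then cf(β_D) = θ. -/

import Mathlib

noncomputable section

universe u

open Cardinal Set

/-- The order type of a set of ordinals: the unique ordinal `o` such that `s` is
order-isomorphic to `Set.Iio o` (and `0` if there is no such ordinal). -/
def otp (s : Set Ordinal) : Ordinal :=
  sInf {o : Ordinal | Nonempty (s ≃o Set.Iio o)}

/-- `A` is unbounded in `β`. -/
def IsUnboundedIn (A : Set Ordinal) (β : Ordinal) : Prop :=
  ∀ γ < β, ∃ δ ∈ A, γ ≤ δ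

/-- `γ` is a limit of elements of `C`. -/
def IsAccPt (C : Set Ordinal) (γ : Ordinal) : Prop :=
  ∀ δ < γ, ∃ ε ∈ C, δ < ε ∧ ε < γ

/-- `C` is club in `β`: a subset of `β`, unbounded in `β`, and closed under limits below `β`. -/
def IsClubIn (C : Set Ordinal) (β : Ordinal) : Prop :=
  C ⊆ Set.Iio β ∧ IsUnboundedIn C β ∧ ∀ γ < β, 0 < γ → IsAccPt C γ → γ ∈ C

/-- `S` is stationary in `β`: it meets every club in `β`. -/
def IsStationaryIn (S : Set Ordinal) (β : Ordinal) : Prop :=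
  ∀ C, IsClubIn C β → (S ∩ C).Nonempty

/-- `D` is a `θ`-covering matrix for `lam`. -/
def IsCoveringMatrix (θ lam : Cardinal) (D : Ordinal → Ordinal → Set Ordinal) : Prop :=
  (∀ β < lam.ord, (⋃ i ∈ Set.Iio θ.ord, D i β) = Set.Iio β) ∧
  (∀ β < lam.ord, ∀ i j, i < j → j < θ.ord → D i β ⊆ D j β) ∧
  (∀ β γ, β < γ → γ < lam.ord → ∀ i < θ.ord, ∃ j < θ.ord, D i β ⊆ D j γ)

/-- `D` is transitive. -/
def TransitiveMatrix (θ lam : Cardinal) (D : Ordinal → Ordinal → Set Ordinal) : Prop :=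
  ∀ α β, α < β → β < lam.ord → ∀ i < θ.ord, α ∈ D i β → D i α ⊆ D i β

/-- `D` is uniform: every limit `β < lam` has some `D i β` containing a club in `β`. -/
def UniformMatrix (θ lam : Cardinal) (D : Ordinal → Ordinal → Set Ordinal) : Prop :=
  ∀ β < lam.ord, Order.IsSuccLimit β → ∃ i < θ.ord, ∃ C ⊆ D i β, IsClubIn C β

/-- `D` is normal: the order types of its entries are bounded below `lam`. -/
def NormalMatrix (θ lam : Cardinal) (D : Ordinal → Ordinal → Set Ordinal) : Prop :=
  ∃ b < lam.ord, ∀ i < θ.ord, ∀ γ < lam.ord, otp (D i γ) < b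

/-- `β_D`: the least ordinal strictly above the order types of all entries of `D`. -/
def matrixBound (θ lam : Cardinal) (D : Ordinal → Ordinal → Set Ordinal) : Ordinal :=
  sInf {b | ∀ i < θ.ord, ∀ γ < lam.ord, otp (D i γ) < b}

/-- `D` is downward coherent. -/
def DownwardCoherent (θ lam : Cardinal) (D : Ordinal → Ordinal → Set Ordinal) : Prop :=
  ∀ α β, α < β → β < lam.ord → ∀ i < θ.ord, ∃ j < θ.ord, D i β ∩ Set.Iio α ⊆ D j α

/-- `D` is locally downward coherent. -/
def LocallyDownwardCoherent (θ lam : Cardinal.{u})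
    (D : Ordinal.{u} → Ordinal.{u} → Set Ordinal.{u}) : Prop :=
  ∀ X : Set Ordinal.{u}, X ⊆ Set.Iio lam.ord → #X ≤ Cardinal.lift.{u + 1} θ →
    ∃ γX < lam.ord, ∀ β < lam.ord, ∀ i < θ.ord, ∃ j < θ.ord,
      X ∩ D i β ⊆ X ∩ D j γX

/-- `D` is strongly locally downward coherent. -/
def StronglyLocallyDownwardCoherent (θ lam : Cardinal.{u})
    (D : Ordinal.{u} → Ordinal.{u} → Set Ordinal.{u}) : Prop :=
  ∀ X : Set Ordinal.{u}, X ⊆ Set.Iio lam.ord → #X ≤ Cardinal.lift.{u + 1} θ →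
    ∃ γX < lam.ord, ∀ β, γX ≤ β → β < lam.ord →
      ∃ i < θ.ord, ∀ j, i ≤ j → j < θ.ord → X ∩ D j β = X ∩ D j γX

/-- `D` covers `[T]^κ`. -/
def Covers (θ lam : Cardinal.{u}) (D : Ordinal.{u} → Ordinal.{u} → Set Ordinal.{u})
    (T : Set Ordinal.{u}) (κ : Cardinal.{u}) : Prop :=
  ∀ X ⊆ T, #X = Cardinal.lift.{u + 1} κ → ∃ i < θ.ord, ∃ β < lam.ord, X ⊆ D i β

/-- The covering property `CP(D)`. -/
def CP (θ lam : Cardinal) (D : Ordinal → Ordinal → Set Ordinal) : Prop :=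
  ∃ T ⊆ Set.Iio lam.ord, IsUnboundedIn T lam.ord ∧ Covers θ lam D T θ

/-- `CP(lam, θ)`: `CP(D)` holds for every locally downward coherent `θ`-covering matrix `D`. -/
def CPAll (θ lam : Cardinal) : Prop :=
  ∀ D, IsCoveringMatrix θ lam D → LocallyDownwardCoherent θ lam D → CP θ lam D

/-- `A_D`: the set of good points for `D`. -/
def goodPoints (θ lam : Cardinal) (D : Ordinal → Ordinal → Set Ordinal) : Set Ordinal :=
  {β | β < lam.ord ∧ θ < Ordinal.cof β ∧
    ∃ A ⊆ Set.Iio β, IsUnboundedIn A β ∧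
      ∀ γ < β, ∃ α < β, ∃ i < θ.ord, A ∩ Set.Iio γ ⊆ D i α}

/-- `θ^{+η}`: the `η`-th iterated cardinal successor of `θ`. -/
def iterSucc (θ : Cardinal) (η : Ordinal) : Cardinal :=
  Ordinal.limitRecOn η θ (fun _ ih => Order.succ ih)
    (fun o _ ih => ⨆ i : Set.Iio o, ih i.1 i.2)

/-- `f <* g` mod bounded subsets of `θ`. -/
def ltStar (θ : Cardinal) (f g : Ordinal → Ordinal) : Prop :=
  ∃ i < θ.ord, ∀ j, i ≤ j → j < θ.ord → f j < g j

/-- `⟨f β : β < δ⟩` is a club-increasing sequence of functions from `θ` to the ordinals. -/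
def ClubIncreasing (θ : Cardinal) (δ : Ordinal) (f : Ordinal → Ordinal → Ordinal) : Prop :=
  (∀ β < δ, ∀ i j, i ≤ j → j < θ.ord → f β i ≤ f β j) ∧
  (∀ α β, α < β → β < δ → ltStar θ (f α) (f β)) ∧
  (∀ β < δ, θ < Ordinal.cof β → ∃ C, IsClubIn C β ∧ ∃ i < θ.ord,
    ∀ α ∈ C, ∀ j, i ≤ j → j < θ.ord → f α j < f β j)

/-- `γ_f`: the least ordinal strictly above all values of the sequence. -/
def seqBound (θ : Cardinal) (δ : Ordinal) (f : Ordinal → Ordinal → Ordinal) : Ordinal :=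
  sInf {γ | ∀ β < δ, ∀ i < θ.ord, f β i < γ}

/-- `g` is an exact upper bound for `⟨f β : β < δ⟩` with respect to `<*` on `θ`. -/
def IsEub (θ : Cardinal) (δ : Ordinal) (f : Ordinal → Ordinal → Ordinal)
    (g : Ordinal → Ordinal) : Prop :=
  (∀ β < δ, ltStar θ (f β) g) ∧
  ∀ h : Ordinal → Ordinal, ltStar θ h g → ∃ β < δ, ltStar θ h (f β)

/-- The simultaneous stationary reflection principle `R(lam, θ)`. -/
def RPrinciple (lam θ : Cardinal) : Prop :=
  ∃ S ⊆ Set.Iio lam.ord, IsStationaryIn S lam.ord ∧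
    ∀ T : Ordinal → Set Ordinal,
      (∀ j < θ.ord, T j ⊆ S ∧ IsStationaryIn (T j) lam.ord) →
      ∃ α < lam.ord, ℵ₀ < Ordinal.cof α ∧
        ∀ j < θ.ord, IsStationaryIn (T j ∩ Set.Iio α) α

/-- A `□_κ`-sequence. -/
def IsSquareSeq (κ : Cardinal) (C : Ordinal → Set Ordinal) : Prop :=
  ∀ β < (Order.succ κ).ord, Order.IsSuccLimit β →
    IsClubIn (C β) β ∧ otp (C β) ≤ κ.ord ∧
    ∀ α ∈ C β, 0 < α → IsAccPt (C β) α → C β ∩ Set.Iio α = C α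

/-- The square principle `□_κ`. -/
def SquarePrinciple (κ : Cardinal) : Prop := ∃ C, IsSquareSeq κ C

/-- `f <* g` mod finite on `B ⊆ ω`. -/
def ltStarB (B : Set ℕ) (f g : ℕ → Ordinal) : Prop :=
  ∃ m, ∀ n ∈ B, m ≤ n → f n < g n

/-- `g` is an exact upper bound for `⟨f α : α < δ⟩` with respect to `<*` mod finite on `B`. -/
def IsEubB (B : Set ℕ) (δ : Ordinal) (f : Ordinal → ℕ → Ordinal) (g : ℕ → Ordinal) : Prop :=
  (∀ α < δ, ltStarB B (f α) g) ∧
  ∀ h : ℕ → Ordinal, ltStarB B h g → ∃ α < δ, ltStarB B h (f α)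

/-- A scale of length `ℵ_{ω+1}` in `∏_{n ∈ B} ℵ_n`. -/
def IsScale (B : Set ℕ) (f : Ordinal → ℕ → Ordinal) : Prop :=
  (∀ α < (Cardinal.aleph (Ordinal.omega0 + 1)).ord, ∀ n ∈ B, f α n < (Cardinal.aleph n).ord) ∧
  (∀ α β, α < β → β < (Cardinal.aleph (Ordinal.omega0 + 1)).ord → ltStarB B (f α) (f β)) ∧
  (∀ g : ℕ → Ordinal, (∀ n ∈ B, g n < (Cardinal.aleph n).ord) →
    ∃ α < (Cardinal.aleph (Ordinal.omega0 + 1)).ord, ltStarB B g (f α))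

/-! Every entry of `D` is strictly outgrown in order type by an entry one column further
(`D i γ` embeds into the part below `γ` of some `D j (γ + 1)`, which also contains `γ`), so
`β_D` is a limit ordinal. As `β_D < λ` and `λ` is regular, the fewer than `λ` entries witnessing
the ordinals below `β_D` all lie inside entries of one column `γ`; hence `i ↦ otp (D i γ)` is a
monotone map from `θ` with range cofinal in `β_D`, and such a map preserves cofinality. -/

theorem Order.cof_congr_of_monotone {α β : Type u} [LinearOrder α] [LinearOrder β] [NoMaxOrder β]
    {f : α → β} (hf : Monotone f) (hf' : IsCofinal (range f)) : cof α = cof β := by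
  apply le_antisymm <;> rw [le_cof_iff] <;> intro s hs
  · have H (x : s) : ∃ y : α, x ≤ f y := by simpa using hf' x
    choose g hg using H
    refine (cof_le (s := range g) fun a ↦ ?_).trans mk_range_le
    obtain ⟨b, hb⟩ := exists_gt (f a)
    obtain ⟨c, hc, hbc⟩ := hs b
    exact ⟨_, mem_range_self ⟨c, hc⟩, (hf.reflect_lt (hb.trans_le (hbc.trans (hg ⟨c, hc⟩)))).le⟩
  · exact (cof_le (hs.image hf hf')).trans mk_image_le

theorem Ordinal.cof_congr_of_monotone {a b : Ordinal.{u}} {f : Iio a → Iio b} (hf : Monotone f)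
    (hf' : IsCofinal (range f)) (hb : Order.IsSuccPrelimit b) : a.cof = b.cof := by
  have := hb.noMaxOrder_Iio
  have h := Order.cof_congr_of_monotone hf hf'
  rwa [cof_Iio, cof_Iio, ← lift_cof, ← lift_cof, Cardinal.lift_inj] at h

section OrderType

open scoped Ordinal

variable {s t : Set Ordinal.{u}} {a b : Ordinal.{u}}

theorem lift_otp_eq_typeLT (hs : s ⊆ Iio b) : Ordinal.lift.{u + 1} (otp.{u, u} s) = typeLT s := by
  have hle : typeLT s ≤ Ordinal.lift.{u + 1} b := by
    simpa using Ordinal.type_mono hs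
  obtain ⟨o, ho⟩ := Ordinal.mem_range_lift_of_le hle
  have hne : {o : Ordinal.{u} | Nonempty (s ≃o Iio o)}.Nonempty := by
    refine ⟨o, ?_⟩
    obtain ⟨e⟩ := Ordinal.type_eq.1 (show typeLT s = typeLT (Iio o) by rw [Ordinal.type_lt_Iio, ho])
    exact ⟨OrderIso.ofRelIsoLT e⟩
  obtain ⟨e⟩ := csInf_mem hne
  rw [← Ordinal.type_lt_Iio]
  exact e.ordinalType_congr.symm

theorem otp_mono (hst : s ⊆ t) (ht : t ⊆ Iio b) : otp.{u, u} s ≤ otp.{u, u} t := by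
  rw [← Ordinal.lift_le.{u + 1}, lift_otp_eq_typeLT (hst.trans ht), lift_otp_eq_typeLT ht]
  exact Ordinal.type_mono hst

theorem otp_lt_otp (hs : s ⊆ t ∩ Iio a) (ha : a ∈ t) (ht : t ⊆ Iio b) :
    otp.{u, u} s < otp.{u, u} t := by
  rw [← Ordinal.lift_lt.{u + 1}, lift_otp_eq_typeLT ((hs.trans inter_subset_left).trans ht),
    lift_otp_eq_typeLT ht]
  let e : s ↪o Iio (⟨a, ha⟩ : t) :=
    OrderEmbedding.ofStrictMono (fun x ↦ ⟨⟨x, (hs x.2).1⟩, (hs x.2).2⟩) fun _ _ h ↦ h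
  calc typeLT s ≤ typeLT (Iio (⟨a, ha⟩ : t)) := e.ltEmbedding.ordinal_type_le
    _ < typeLT t := Ordinal.typein_lt_type _ _

end OrderType

section CoveringMatrix

variable {θ lam : Cardinal.{u}} {D : Ordinal.{u} → Ordinal.{u} → Set Ordinal.{u}}
  {i γ : Ordinal.{u}}

theorem IsCoveringMatrix.subset_Iio (hD : IsCoveringMatrix θ lam D) (hi : i < θ.ord)
    (hγ : γ < lam.ord) : D i γ ⊆ Iio γ := by
  rw [← hD.1 γ hγ]
  exact subset_biUnion_of_mem (u := fun i ↦ D i γ) hi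

theorem IsCoveringMatrix.mono (hD : IsCoveringMatrix θ lam D) {j : Ordinal} (hij : i ≤ j)
    (hj : j < θ.ord) (hγ : γ < lam.ord) : D i γ ⊆ D j γ := by
  rcases hij.eq_or_lt with rfl | h
  · exact subset_rfl
  · exact hD.2.1 γ hγ i j h hj

theorem IsCoveringMatrix.exists_mem (hD : IsCoveringMatrix θ lam D) {α : Ordinal} (hα : α < γ)
    (hγ : γ < lam.ord) : ∃ i < θ.ord, α ∈ D i γ := by
  rw [← mem_Iio, ← hD.1 γ hγ] at hα
  simpa using hα

theorem IsCoveringMatrix.exists_otp_lt_otp (hD : IsCoveringMatrix θ lam D)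
    (hlam : Order.IsSuccLimit lam.ord) (hi : i < θ.ord) (hγ : γ < lam.ord) :
    ∃ j < θ.ord, otp.{u, u} (D i γ) < otp.{u, u} (D j (Order.succ γ)) := by
  have hγ' := hlam.succ_lt hγ
  obtain ⟨k, hk, hik⟩ := hD.2.2 γ _ (Order.lt_succ γ) hγ' i hi
  obtain ⟨m, hm, hγm⟩ := hD.exists_mem (Order.lt_succ γ) hγ'
  have hj : max k m < θ.ord := max_lt hk hm
  refine ⟨max k m, hj, otp_lt_otp (fun x hx ↦ ⟨?_, hD.subset_Iio hi hγ hx⟩)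
    (hD.mono (le_max_right k m) hj hγ' hγm) (hD.subset_Iio hj hγ')⟩
  exact hD.mono (le_max_left k m) hj hγ' (hik hx)

theorem NormalMatrix.otp_lt_matrixBound (hn : NormalMatrix θ lam D) (hi : i < θ.ord)
    (hγ : γ < lam.ord) : otp.{u, u} (D i γ) < (matrixBound θ lam D : Ordinal.{u}) :=
  have ⟨b, _, hb⟩ := hn
  csInf_mem (s := {b | ∀ i < θ.ord, ∀ γ < lam.ord, otp (D i γ) < b}) ⟨b, hb⟩ i hi γ hγ

theorem NormalMatrix.matrixBound_lt_ord (hn : NormalMatrix θ lam D) :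
    (matrixBound θ lam D : Ordinal.{u}) < lam.ord :=
  have ⟨_, hb, hbD⟩ := hn
  (csInf_le' (s := {b | ∀ i < θ.ord, ∀ γ < lam.ord, otp (D i γ) < b}) hbD).trans_lt hb

theorem exists_le_otp_of_lt_matrixBound {b : Ordinal.{u}} (hb : b < matrixBound θ lam D) :
    ∃ i < θ.ord, ∃ γ < lam.ord, b ≤ otp.{u, u} (D i γ) := by
  by_contra! h
  exact notMem_of_lt_csInf' hb h

theorem IsCoveringMatrix.isSuccPrelimit_matrixBound (hD : IsCoveringMatrix θ lam D)
    (hn : NormalMatrix θ lam D) (hlam : Order.IsSuccLimit lam.ord) :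
    Order.IsSuccPrelimit (matrixBound θ lam D : Ordinal.{u}) := by
  refine Order.isSuccPrelimit_of_succ_lt fun b hb ↦ ?_
  obtain ⟨i, hi, γ, hγ, hbi⟩ := exists_le_otp_of_lt_matrixBound hb
  obtain ⟨j, hj, hij⟩ := hD.exists_otp_lt_otp hlam hi hγ
  exact Order.succ_le_of_lt (hbi.trans_lt hij) |>.trans_lt
    (hn.otp_lt_matrixBound hj (hlam.succ_lt hγ))

theorem IsCoveringMatrix.exists_column_isCofinal (hD : IsCoveringMatrix θ lam D)
    (hn : NormalMatrix θ lam D) (hlam : lam.IsRegular) :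
    ∃ γ < lam.ord, ∀ b < (matrixBound θ lam D : Ordinal.{u}), ∃ i < θ.ord,
      b ≤ otp.{u, u} (D i γ) := by
  have H (b : Iio (matrixBound θ lam D : Ordinal.{u})) :=
    exists_le_otp_of_lt_matrixBound b.2
  choose i hi γ hγ hbi using H
  have hsup : ⨆ b, γ b + 1 < lam.ord := by
    refine Ordinal.lift_iSup_add_one_lt_of_lt_cof ?_ hγ
    rw [mk_Iio_ordinal, ← Ordinal.lift_cof, hlam.cof_ord, Cardinal.lift_lift, Cardinal.lift_lt,
      ← Cardinal.lt_ord]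
    exact hn.matrixBound_lt_ord
  refine ⟨_, hsup, fun b hb ↦ ?_⟩
  obtain ⟨j, hj, hij⟩ := hD.2.2 _ _ (Ordinal.lt_iSup_add_one γ ⟨b, hb⟩) hsup _ (hi ⟨b, hb⟩)
  exact ⟨j, hj, (hbi ⟨b, hb⟩).trans (otp_mono hij (hD.subset_Iio hj hsup))⟩

theorem IsCoveringMatrix.cof_matrixBound (hD : IsCoveringMatrix θ lam D)
    (hn : NormalMatrix θ lam D) (hθ : θ.IsRegular) (hlam : lam.IsRegular) :
    (matrixBound θ lam D : Ordinal.{u}).cof = θ := by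
  obtain ⟨γ, hγ, hcof⟩ := hD.exists_column_isCofinal hn hlam
  let f (i : Iio θ.ord) : Iio (matrixBound θ lam D : Ordinal.{u}) :=
    ⟨otp (D i γ), hn.otp_lt_matrixBound i.2 hγ⟩
  have hf : Monotone f := fun i j hij ↦
    otp_mono (hD.mono hij j.2 hγ) (hD.subset_Iio j.2 hγ)
  have hf' : IsCofinal (range f) := fun b ↦
    have ⟨i, hi, hbi⟩ := hcof b b.2
    ⟨f ⟨i, hi⟩, mem_range_self _, hbi⟩
  rw [← Ordinal.cof_congr_of_monotone hf hf'
    (hD.isSuccPrelimit_matrixBound hn (Cardinal.isSuccLimit_ord hlam.aleph0_le)), hθ.cof_ord]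

end CoveringMatrix

theorem stmt17_general (θ lam : Cardinal) (hθ : θ.IsRegular) (hlam : lam.IsRegular) (hθlam : θ < lam)
    (D : Ordinal → Ordinal → Set Ordinal) (hD : IsCoveringMatrix θ lam D)
    (hn : NormalMatrix θ lam D) :
    Ordinal.cof (matrixBound θ lam D) = θ :=
  hD.cof_matrixBound hn hθ hlam

/-- If `θ < lam` are infinite regular cardinals and `D` is a transitive,
uniform, normal `θ`-covering matrix for `lam`, then `cf(β_D) = θ`. -/
theorem stmt17 (θ lam : Cardinal) (hθ : θ.IsRegular) (hlam : lam.IsRegular) (hθlam : θ < lam)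
    (D : Ordinal → Ordinal → Set Ordinal) (hD : IsCoveringMatrix θ lam D)
    (htr : TransitiveMatrix θ lam D) (hu : UniformMatrix θ lam D)
    (hn : NormalMatrix θ lam D) :
    Ordinal.cof (matrixBound θ lam D) = θ :=
  stmt17_general θ lam hθ hlam hθlam D hD hn

end
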